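/- arXiv:2002.01805 — 8 statements merged into one kernel-verified Lean document; each statement's English description precedes it below -/
import Mathlib

section
/- Let E be a finite set, r : E × E → ℝ with r(x,x)=0, and V : E → ℝ. Define A on functions f : E → ℝ by (Af)(x) = ∑_y r(x,y)(f(y)-f(x)) + V(x)f(x). Define the lifted operator on functions g : E × {-1,+1} → ℝ by (Âg)(x,s) = ∑_y r⁺(x,y)(g(y,s)-g(x,s)) + ∑_y r⁻(x,y)(g(y,-s)-g(x,s)) + (2∑_y r⁻(x,y) + V(x))·g(x,s), where r⁺(x,y)=max(r(x,y),0), r⁻(x,y)=max(-r(x,y),0). Then for every f : E → ℝ, setting f̂(x,s) = s·f(x), we have (Âf̂)(x,s) = s·(Af)(x) for all x ∈ E, s ∈ {-1,+1}. -/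
/-- With `A f x = ∑ y, r x y * (f y - f x) + V x * f x` and the lifted
operator `Â` acting on `g : E × signs → ℝ`, the lift `f̂ (x,s) = s * f x` satisfies
`(Â f̂)(x,s) = s * (A f)(x)` for `s = ±1`.  Here the action of `Â` on `f̂` is written
out explicitly, using `f̂ (y, s) = s * f y` and `f̂ (y, -s) = (-s) * f y`. -/
theorem stmt1 (E : Type*) [Fintype E] (r : E → E → ℝ) (hr : ∀ x, r x x = 0)
    (V : E → ℝ) (f : E → ℝ) (x : E) (s : ℝ) (hs : s = 1 ∨ s = -1) :
    (∑ y, max (r x y) 0 * (s * f y - s * f x))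
      + (∑ y, max (-(r x y)) 0 * ((-s) * f y - s * f x))
      + (2 * (∑ y, max (-(r x y)) 0) + V x) * (s * f x)
    = s * ((∑ y, r x y * (f y - f x)) + V x * f x) := by
  have hsum : (∑ y, max (r x y) 0 * (s * f y - s * f x))
      + ((∑ y, max (-(r x y)) 0 * ((-s) * f y - s * f x))
      + (∑ y, 2 * max (-(r x y)) 0 * (s * f x)))
      = ∑ y, s * (r x y * (f y - f x)) := by
    rw [← Finset.sum_add_distrib, ← Finset.sum_add_distrib]
    refine Finset.sum_congr rfl fun y _ => ?_
    have h := max_zero_sub_eq_self (r x y)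
    linear_combination (s * (f y - f x)) * h
  have h2 : (∑ y, 2 * max (-(r x y)) 0 * (s * f x))
      = 2 * (∑ y, max (-(r x y)) 0) * (s * f x) := by
    simp only [Finset.mul_sum, Finset.sum_mul]
  have h3 : (∑ y, s * (r x y * (f y - f x))) = s * ∑ y, r x y * (f y - f x) := by
    rw [Finset.mul_sum]
  rw [h2] at hsum
  linarith [hsum, h3]
end

section
/- Let E be a finite set, r : E × E → ℝ with r(x,x)=0, V : E → ℝ, and let A, Â, and f̂(x,s)=s·f(x) be as in the lifted-operator setup. Then for every f : E → ℝ, every t ≥ 0, and every x ∈ E: (e^{tA} f)(x) = (e^{tÂ} f̂)(x, +1). That is, the semigroup generated by A is recovered from the semigroup generated by the lifted operator by evaluating at sign +1. -/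
open NormedSpace

/-- With `A f x = ∑ y, r x y * (f y - f x) + V x * f x` and the lifted
operator `Â` on `E × Bool` (with `true` ↔ sign `+1`, `false` ↔ sign `-1`) given by
`(Â g)(x,s) = ∑ y, r⁺ x y (g(y,s) - g(x,s)) + ∑ y, r⁻ x y (g(y,¬s) - g(x,s))
  + (2 ∑ y, r⁻ x y + V x) g(x,s)`,
the semigroup of `A` is recovered from that of `Â` by evaluating the lift
`f̂ (y,s) = (±1) * f y` at sign `+1`: `(e^{tA} f)(x) = (e^{tÂ} f̂)(x, +1)`. -/
theorem stmt2 (E : Type*) [Fintype E] (r : E → E → ℝ) (hr : ∀ x, r x x = 0)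
    (V : E → ℝ)
    (A : (E → ℝ) →L[ℝ] (E → ℝ))
    (hA : ∀ (f : E → ℝ) (x : E),
      A f x = (∑ y, r x y * (f y - f x)) + V x * f x)
    (Ahat : (E × Bool → ℝ) →L[ℝ] (E × Bool → ℝ))
    (hAhat : ∀ (g : E × Bool → ℝ) (x : E) (s : Bool),
      Ahat g (x, s) = (∑ y, max (r x y) 0 * (g (y, s) - g (x, s)))
        + (∑ y, max (-(r x y)) 0 * (g (y, !s) - g (x, s)))
        + (2 * (∑ y, max (-(r x y)) 0) + V x) * g (x, s)) :
    ∀ (f : E → ℝ) (t : ℝ), 0 ≤ t → ∀ x : E,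
      (exp (t • A)) f x
        = (exp (t • Ahat)) (fun p => (if p.2 then (1:ℝ) else -1) * f p.1) (x, true) := by
  classical
  intro f t ht x
  -- the lifting map `L f = f̂`
  let L0 : (E → ℝ) →ₗ[ℝ] (E × Bool → ℝ) :=
    { toFun := fun f p => (if p.2 then (1:ℝ) else -1) * f p.1
      map_add' := by intro f g; funext p; simp [mul_add]
      map_smul' := by
        intro c f; funext p
        simp only [Pi.smul_apply, smul_eq_mul, RingHom.id_apply]
        ring }
  let L : (E → ℝ) →L[ℝ] (E × Bool → ℝ) := LinearMap.toContinuousLinearMap L0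
  have hL : ∀ (g : E → ℝ) (p : E × Bool), L g p = (if p.2 then (1:ℝ) else -1) * g p.1 :=
    fun g p => rfl
  -- intertwining relation `Â ∘ L = L ∘ A`
  have hcomm : Ahat.comp L = L.comp A := by
    ext g p
    obtain ⟨z, s⟩ := p
    have main : ∀ σ : ℝ,
        (∑ y, max (r z y) 0 * (σ * g y - σ * g z))
          + (∑ y, max (-(r z y)) 0 * (-σ * g y - σ * g z))
          + (2 * (∑ y, max (-(r z y)) 0) + V z) * (σ * g z)
        = σ * ((∑ y, r z y * (g y - g z)) + V z * g z) := by
      intro σ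
      have key : ∀ y, σ * (r z y * (g y - g z))
          = max (r z y) 0 * (σ * g y - σ * g z)
            + max (-(r z y)) 0 * (-σ * g y - σ * g z)
            + 2 * max (-(r z y)) 0 * (σ * g z) := by
        intro y
        have h : max (r z y) 0 - max (-(r z y)) 0 = r z y :=
          max_zero_sub_max_neg_zero_eq_self _
        linear_combination (-(σ * g y) + σ * g z) * h
      have hsum : (∑ y, 2 * max (-(r z y)) 0 * (σ * g z))
          = 2 * (∑ y, max (-(r z y)) 0) * (σ * g z) := by
        rw [← Finset.sum_mul, ← Finset.mul_sum]
      calc (∑ y, max (r z y) 0 * (σ * g y - σ * g z))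
            + (∑ y, max (-(r z y)) 0 * (-σ * g y - σ * g z))
            + (2 * (∑ y, max (-(r z y)) 0) + V z) * (σ * g z)
          = (∑ y, (max (r z y) 0 * (σ * g y - σ * g z)
              + max (-(r z y)) 0 * (-σ * g y - σ * g z)
              + 2 * max (-(r z y)) 0 * (σ * g z))) + V z * (σ * g z) := by
            rw [Finset.sum_add_distrib, Finset.sum_add_distrib, hsum]; ring
        _ = (∑ y, σ * (r z y * (g y - g z))) + V z * (σ * g z) := by
            refine congrArg₂ (· + ·) (Finset.sum_congr rfl fun y _ => (key y).symm) rfl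
        _ = σ * ((∑ y, r z y * (g y - g z)) + V z * g z) := by
            rw [← Finset.mul_sum]; ring
    have hstep : (if (!s) then (1:ℝ) else -1) = -(if s then (1:ℝ) else -1) := by
      cases s <;> norm_num
    simp only [ContinuousLinearMap.comp_apply, hAhat, hA, hL, hstep, neg_mul]
    have := main (if s then (1:ℝ) else -1)
    simpa [neg_mul] using this
  -- intertwining for powers
  have h1 : (t • Ahat).comp L = L.comp (t • A) := by
    rw [ContinuousLinearMap.smul_comp, hcomm, ContinuousLinearMap.comp_smul]
  have hpow : ∀ n : ℕ, ((t • Ahat) ^ n).comp L = L.comp ((t • A) ^ n) := by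
    intro n
    induction n with
    | zero => simp [ContinuousLinearMap.one_def]
    | succ n ih =>
      rw [pow_succ, pow_succ, ContinuousLinearMap.mul_def, ContinuousLinearMap.mul_def,
        ContinuousLinearMap.comp_assoc, h1, ← ContinuousLinearMap.comp_assoc, ih,
        ContinuousLinearMap.comp_assoc]
  -- intertwining for the exponentials
  have hs1 : Summable (fun n : ℕ => ((Nat.factorial n : ℝ))⁻¹ • (t • Ahat) ^ n) :=
    NormedSpace.expSeries_summable' _
  have hs2 : Summable (fun n : ℕ => ((Nat.factorial n : ℝ))⁻¹ • (t • A) ^ n) :=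
    NormedSpace.expSeries_summable' _
  have e1 : ((ContinuousLinearMap.compL ℝ (E → ℝ) (E × Bool → ℝ) (E × Bool → ℝ)).flip L)
        (exp (t • Ahat))
      = ∑' n : ℕ, ((ContinuousLinearMap.compL ℝ (E → ℝ) (E × Bool → ℝ) (E × Bool → ℝ)).flip L)
        (((Nat.factorial n : ℝ))⁻¹ • (t • Ahat) ^ n) := by
    rw [NormedSpace.exp_eq_tsum (𝕂 := ℝ)]
    exact ContinuousLinearMap.map_tsum _ hs1
  have e2 : ((ContinuousLinearMap.compL ℝ (E → ℝ) (E → ℝ) (E × Bool → ℝ)) L)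
        (exp (t • A))
      = ∑' n : ℕ, ((ContinuousLinearMap.compL ℝ (E → ℝ) (E → ℝ) (E × Bool → ℝ)) L)
        (((Nat.factorial n : ℝ))⁻¹ • (t • A) ^ n) := by
    rw [NormedSpace.exp_eq_tsum (𝕂 := ℝ)]
    exact ContinuousLinearMap.map_tsum _ hs2
  simp only [ContinuousLinearMap.flip_apply, ContinuousLinearMap.compL_apply, map_smul,
    ContinuousLinearMap.smul_comp, ContinuousLinearMap.comp_smul] at e1 e2
  simp only [hpow] at e1
  have hexp : (exp (t • Ahat)).comp L = L.comp (exp (t • A)) := e1.trans e2.symm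
  have happ : exp (t • Ahat) (L f) (x, true) = L (exp (t • A) f) (x, true) := by
    have h := congrArg (fun B : (E → ℝ) →L[ℝ] (E × Bool → ℝ) => B f (x, true)) hexp
    simpa using h
  have hLf : L f = fun p : E × Bool => (if p.2 then (1:ℝ) else -1) * f p.1 := rfl
  rw [← hLf, happ, hL]
  simp
end

section
/- Let E be a finite set and let Δ̂ be the Markov generator on E = ℤ/nℤ of the random walk jumping ±1 at rate 1 and ±2 at rate ¼ (all arithmetic mod n). Let L = ΔΔ be the double discrete Laplacian on ℤ/nℤ, (Lf)(x) = ¼(f(x+2)-f(x)) + ¼(f(x-2)-f(x)) - (f(x+1)-f(x)) - (f(x-1)-f(x)). Suppose n is even. Then for every f : ℤ/nℤ → ℝ and t ≥ 0, (e^{tL}f)(x) = e^{4t} · E_x[Z_t f(X̂_t)], where Z_t = 2·1{X̂_t - x is even} - 1 and X̂ is the Markov chain generated by Δ̂. Equivalently, in matrix form: e^{tL} = e^{4t} · P · e^{tΔ̂} on even-parity-respecting decomposition, i.e., (e^{tL})(x,y) = e^{4t} (-1)^{x-y} (e^{tΔ̂})(x,y). -/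
open NormedSpace

noncomputable def Dop (n : ℕ) [NeZero n] : (ZMod n → ℝ) →L[ℝ] (ZMod n → ℝ) :=
  LinearMap.toContinuousLinearMap
    (LinearMap.pi fun y : ZMod n => ((-1 : ℝ) ^ y.val) • LinearMap.proj y)

@[simp] lemma Dop_apply (n : ℕ) [NeZero n] (f : ZMod n → ℝ) (x : ZMod n) :
    Dop n f x = (-1 : ℝ) ^ x.val * f x := rfl

lemma sgn_mod {n : ℕ} (hn : Even n) (m : ℕ) : (-1 : ℝ) ^ (m % n) = (-1) ^ m := by
  conv_rhs => rw [← Nat.div_add_mod m n]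
  rw [pow_add, pow_mul, hn.neg_one_pow, one_pow, one_mul]

lemma sgn_add {n : ℕ} [NeZero n] (hn : Even n) (a b : ZMod n) :
    (-1 : ℝ) ^ (a + b).val = (-1) ^ a.val * (-1) ^ b.val := by
  rw [ZMod.val_add, sgn_mod hn, pow_add]

lemma sgn_sq {n : ℕ} [NeZero n] (x : ZMod n) :
    (-1 : ℝ) ^ x.val * (-1) ^ x.val = 1 := by
  rw [← pow_add]; exact Even.neg_one_pow ⟨x.val, rfl⟩

lemma sgn_sub {n : ℕ} [NeZero n] (hn : Even n) (y x : ZMod n) :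
    (-1 : ℝ) ^ (y - x).val = (-1) ^ y.val * (-1) ^ x.val := by
  have h := sgn_add hn (y - x) x
  rw [sub_add_cancel] at h
  calc (-1 : ℝ) ^ (y - x).val
      = (-1 : ℝ) ^ (y - x).val * ((-1) ^ x.val * (-1) ^ x.val) := by rw [sgn_sq, mul_one]
    _ = ((-1 : ℝ) ^ (y - x).val * (-1) ^ x.val) * (-1) ^ x.val := by ring
    _ = (-1) ^ y.val * (-1) ^ x.val := by rw [← h]

lemma sgn_one {n : ℕ} [NeZero n] (hn : Even n) :
    (-1 : ℝ) ^ (1 : ZMod n).val = -1 := by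
  have h2 : 2 ≤ n := by
    rcases hn with ⟨k, hk⟩
    have : n ≠ 0 := NeZero.ne n
    omega
  rw [ZMod.val_one_eq_one_mod, Nat.mod_eq_of_lt h2, pow_one]

/-- On `ℤ/nℤ` with `n` even, let `Δ̂` be the Markov generator of the walk
jumping ±1 at rate 1 and ±2 at rate ¼, and `L = ΔΔ` the double discrete Laplacian.  Then
`(e^{tL} f)(x) = e^{4t} · E_x[Z_t f(X̂_t)]` where `Z_t = (-1)^{X̂_t - x}`; in operator
form, `(e^{tL} f)(x) = e^{4t} · (e^{tΔ̂} g)(x)` with `g y = (-1)^{(y-x)} f y`. -/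
theorem stmt10 (n : ℕ) [NeZero n] (hn : Even n)
    (L Dhat : (ZMod n → ℝ) →L[ℝ] (ZMod n → ℝ))
    (hL : ∀ (f : ZMod n → ℝ) (x : ZMod n),
      L f x = (1/4) * (f (x+2) - f x) + (1/4) * (f (x-2) - f x)
        - (f (x+1) - f x) - (f (x-1) - f x))
    (hDhat : ∀ (f : ZMod n → ℝ) (x : ZMod n),
      Dhat f x = (f (x+1) - f x) + (f (x-1) - f x)
        + (1/4) * (f (x+2) - f x) + (1/4) * (f (x-2) - f x)) :
    ∀ (f : ZMod n → ℝ) (t : ℝ), 0 ≤ t → ∀ x : ZMod n,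
      (exp (t • L)) f x
        = Real.exp (4 * t) *
          (exp (t • Dhat)) (fun y => (-1 : ℝ) ^ (y - x).val * f y) x := by
  intro f t _ x
  let +nondep : NormedAlgebra ℚ ((ZMod n → ℝ) →L[ℝ] (ZMod n → ℝ)) := .restrictScalars ℚ ℝ _
  have hD2 : Dop n * Dop n = 1 := by
    refine ContinuousLinearMap.ext fun g => funext fun z => ?_
    simp only [ContinuousLinearMap.mul_apply, Dop_apply, ContinuousLinearMap.one_apply]
    rw [← mul_assoc, sgn_sq, one_mul]
  set u : ((ZMod n → ℝ) →L[ℝ] (ZMod n → ℝ))ˣ := ⟨Dop n, Dop n, hD2, hD2⟩ with hu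
  have hcu : (↑u : (ZMod n → ℝ) →L[ℝ] (ZMod n → ℝ)) = Dop n := rfl
  have hcu' : (↑u⁻¹ : (ZMod n → ℝ) →L[ℝ] (ZMod n → ℝ)) = Dop n := rfl
  have hconj : t • L
      = ↑u * (t • Dhat + (4*t) • (1 : (ZMod n → ℝ) →L[ℝ] (ZMod n → ℝ))) * ↑u⁻¹ := by
    refine ContinuousLinearMap.ext fun g => funext fun z => ?_
    have e1 : (-1:ℝ)^((z+1).val) = -((-1:ℝ)^z.val) := by
      rw [sgn_add hn, sgn_one hn]; ring
    have e2 : (-1:ℝ)^((z-1).val) = -((-1:ℝ)^z.val) := by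
      rw [sgn_sub hn, sgn_one hn]; ring
    have e3 : (-1:ℝ)^((z+2).val) = (-1:ℝ)^z.val := by
      rw [show z+2 = z+1+1 by ring, sgn_add hn, sgn_one hn, e1]; ring
    have e4 : (-1:ℝ)^((z-2).val) = (-1:ℝ)^z.val := by
      rw [show z-2 = z-1-1 by ring, sgn_sub hn, sgn_one hn, e2]; ring
    rw [hcu, hcu']
    simp only [ContinuousLinearMap.mul_apply, ContinuousLinearMap.add_apply,
      ContinuousLinearMap.smul_apply, ContinuousLinearMap.one_apply, Pi.add_apply, Pi.smul_apply,
      smul_eq_mul, Dop_apply]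
    rw [hL g z, hDhat (Dop n g) z]
    simp only [Dop_apply]
    rw [e1, e2, e3, e4]
    have hs := sgn_sq z
    linear_combination (t * g (z+1) + t * g (z-1) - t * g (z+2)/4
      - 3/2 * t * g z - t * g (z-2)/4) * hs
  have hcomm : Commute (t • Dhat)
      ((4*t) • (1 : (ZMod n → ℝ) →L[ℝ] (ZMod n → ℝ))) :=
    (Commute.one_right (t • Dhat)).smul_right (4*t)
  have hX : exp (t • Dhat + (4*t) • (1 : (ZMod n → ℝ) →L[ℝ] (ZMod n → ℝ)))
      = Real.exp (4*t) • exp (t • Dhat) := by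
    rw [exp_add_of_commute hcomm,
      show ((4*t) • (1 : (ZMod n → ℝ) →L[ℝ] (ZMod n → ℝ)))
        = algebraMap ℝ _ (4*t) from (Algebra.algebraMap_eq_smul_one _).symm,
      ← algebraMap_exp_comm, Algebra.algebraMap_eq_smul_one, ← Real.exp_eq_exp_ℝ,
      mul_smul_comm, mul_one]
  rw [hconj, exp_units_conj, hX, hcu, hcu']
  have hg : (fun y => (-1:ℝ)^((y-x).val) * f y) = ((-1:ℝ)^x.val) • (Dop n f) := by
    funext y
    simp only [Pi.smul_apply, smul_eq_mul, Dop_apply, sgn_sub hn]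
    ring
  rw [hg, map_smul]
  simp only [ContinuousLinearMap.mul_apply, ContinuousLinearMap.smul_apply, Dop_apply,
    Pi.smul_apply, smul_eq_mul]
  ring
end

section
/- Let n be even and work on ℤ/nℤ. Let Δ̂ be the generator with rates ±1 at rate 1 and ±2 at rate ¼, let L be the double discrete Laplacian, and let D be the diagonal matrix with entries D(x,x) = (-1)^x. Then L = D (Δ̂ + 4·Id) D⁻¹, i.e., conjugating the shifted Markov generator Δ̂ + 4·Id by the parity sign matrix yields the double Laplacian with its negative rates. -/
lemma neg_one_pow_val_add {n : ℕ} [NeZero n] (hn : Even n) (x y : ZMod n) :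
    ((-1:ℝ)) ^ ((x+y).val) = (-1:ℝ) ^ x.val * (-1:ℝ) ^ y.val := by
  rw [ZMod.val_add, ← pow_add]
  have h2 : (x.val + y.val) % n % 2 = (x.val + y.val) % 2 :=
    Nat.mod_mod_of_dvd _ hn.two_dvd
  rcases Nat.even_or_odd (x.val + y.val) with h | h
  · rw [h.neg_one_pow, Even.neg_one_pow]
    rw [Nat.even_iff, h2, ← Nat.even_iff]; exact h
  · rw [h.neg_one_pow, Odd.neg_one_pow]
    rw [Nat.odd_iff, h2, ← Nat.odd_iff]; exact h

/-- On `ℤ/nℤ` with `n` even, the double discrete Laplacian `L` is the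
conjugation of the shifted Markov generator `Δ̂ + 4·Id` by the parity sign matrix
`D(x,x) = (-1)^x`: pointwise, `(L f)(x) = (-1)^x · ((Δ̂ + 4·Id)(D f))(x)` where
`(D f)(y) = (-1)^y f y`. -/
theorem stmt11 (n : ℕ) [NeZero n] (hn : Even n)
    (L Dhat : (ZMod n → ℝ) → (ZMod n → ℝ))
    (hL : ∀ (f : ZMod n → ℝ) (x : ZMod n),
      L f x = (1/4) * (f (x+2) - f x) + (1/4) * (f (x-2) - f x)
        - (f (x+1) - f x) - (f (x-1) - f x))
    (hDhat : ∀ (f : ZMod n → ℝ) (x : ZMod n),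
      Dhat f x = (f (x+1) - f x) + (f (x-1) - f x)
        + (1/4) * (f (x+2) - f x) + (1/4) * (f (x-2) - f x)) :
    ∀ (f : ZMod n → ℝ) (x : ZMod n),
      L f x = (-1 : ℝ) ^ x.val *
        (Dhat (fun y => (-1 : ℝ) ^ y.val * f y) x
          + 4 * ((-1 : ℝ) ^ x.val * f x)) := by
  intro f x
  have hn2 : 1 < n := by
    rcases Nat.lt_or_ge 1 n with h | h
    · exact h
    · interval_cases n
      · exact absurd rfl (NeZero.ne 0)
      · simp [Nat.even_iff] at hn
  have pm : ∀ m : ℕ, ((-1:ℝ))^m = 1 ∨ ((-1:ℝ))^m = -1 := by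
    intro m
    rcases Nat.even_or_odd m with h | h
    · exact Or.inl h.neg_one_pow
    · exact Or.inr h.neg_one_pow
  have h1 : ((1:ZMod n)).val = 1 := by
    rw [ZMod.val_one_eq_one_mod]; exact Nat.mod_eq_of_lt hn2
  have e1 : ((-1:ℝ)) ^ ((1:ZMod n)).val = -1 := by rw [h1]; ring
  have key : ∀ y : ZMod n, ((-1:ℝ))^((x+y).val) = (-1:ℝ)^x.val * (-1:ℝ)^y.val :=
    fun y => neg_one_pow_val_add hn x y
  have e2 : ((-1:ℝ)) ^ ((2:ZMod n)).val = 1 := by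
    have := neg_one_pow_val_add hn (1:ZMod n) (1:ZMod n)
    rw [e1] at this
    norm_num at this
    exact this
  have em1 : ((-1:ℝ)) ^ ((-1:ZMod n)).val = -1 := by
    have := neg_one_pow_val_add hn (1:ZMod n) (-1:ZMod n)
    simp [e1] at this
    rcases pm ((-1:ZMod n)).val with h | h
    · rw [h] at this; norm_num at this
    · exact h
  have em2 : ((-1:ℝ)) ^ ((-2:ZMod n)).val = 1 := by
    have := neg_one_pow_val_add hn (2:ZMod n) (-2:ZMod n)
    simp [e2] at this
    exact this.symm
  have hx1 : ((-1:ℝ)) ^ ((x+1:ZMod n)).val = -((-1:ℝ)^x.val) := by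
    rw [key 1, e1]; ring
  have hx2 : ((-1:ℝ)) ^ ((x+2:ZMod n)).val = (-1:ℝ)^x.val := by
    rw [key 2, e2]; ring
  have hxm1 : ((-1:ℝ)) ^ ((x-1:ZMod n)).val = -((-1:ℝ)^x.val) := by
    rw [sub_eq_add_neg, key (-1), em1]; ring
  have hxm2 : ((-1:ℝ)) ^ ((x-2:ZMod n)).val = (-1:ℝ)^x.val := by
    rw [sub_eq_add_neg, key (-2), em2]; ring
  rw [hL, hDhat]
  simp only [hx1, hx2, hxm1, hxm2]
  have hs : ((-1:ℝ))^x.val * ((-1:ℝ))^x.val = 1 := by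
    rcases pm x.val with h | h <;> rw [h] <;> ring
  linear_combination (-(-f (x+1) - f (x-1) + 1/4*f (x+2) + 1/4*f (x-2) + 3/2*f x)) * hs
end

section
/- Let E, F be finite sets, L_X a matrix indexed by E, L_Y a matrix indexed by F, and H : E × F → ℝ a function satisfying the generator duality relation [L_X H(·,y)](x) = [L_Y H(x,·)](y) for all x ∈ E, y ∈ F. Then the semigroups satisfy [e^{tL_X} H(·,y)](x) = [e^{tL_Y} H(x,·)](y) for all t ≥ 0, x ∈ E, y ∈ F. -/
set_option synthInstance.maxHeartbeats 1000000
set_option maxHeartbeats 1000000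

open NormedSpace

/-- Expansion of a continuous linear functional-ish application via the standard basis. -/
lemma clm_expand {F : Type*} [Fintype F] [DecidableEq F]
    (B : (F → ℝ) →L[ℝ] (F → ℝ)) (g : F → ℝ) (y : F) :
    B g y = ∑ y' : F, g y' * B (fun j => if y' = j then 1 else 0) y := by
  conv_lhs => rw [pi_eq_sum_univ g]
  rw [map_sum]
  simp [Finset.sum_apply, smul_eq_mul]

lemma swap_lemma {E F : Type*} [Fintype E] [Fintype F]
    (A : (E → ℝ) →L[ℝ] (E → ℝ)) (B : (F → ℝ) →L[ℝ] (F → ℝ))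
    (K : E → F → ℝ) (x : E) (y : F) :
    A (fun x' => B (fun y' => K x' y') y) x
      = B (fun y' => A (fun x' => K x' y') x) y := by
  classical
  have h1 : (fun x' => B (fun y' => K x' y') y)
      = ∑ y' : F, (B (fun j => if y' = j then 1 else 0) y) • (fun x' => K x' y') := by
    funext x'
    rw [clm_expand B (fun y' => K x' y') y]
    simp [Finset.sum_apply, mul_comm]
  rw [h1, map_sum, Finset.sum_apply, clm_expand B _ y]
  simp [mul_comm]

lemma pow_dual {E F : Type*} [Fintype E] [Fintype F]
    (LX : (E → ℝ) →L[ℝ] (E → ℝ)) (LY : (F → ℝ) →L[ℝ] (F → ℝ))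
    (H : E → F → ℝ)
    (hdual : ∀ (x : E) (y : F), LX (fun x' => H x' y) x = LY (fun y' => H x y') y)
    (n : ℕ) : ∀ (x : E) (y : F),
    (LX ^ n) (fun x' => H x' y) x = (LY ^ n) (fun y' => H x y') y := by
  induction n with
  | zero => intro x y; simp
  | succ n ih =>
    intro x y
    have hL : (LX ^ (n+1)) (fun x' => H x' y) x
        = LX (fun x' => (LX ^ n) (fun x'' => H x'' y) x') x := by
      rw [pow_succ']
      rfl
    rw [hL]
    have : (fun x' => (LX ^ n) (fun x'' => H x'' y) x')
        = fun x' => (LY ^ n) (fun y' => H x' y') y := by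
      funext x'; exact ih x' y
    rw [this, swap_lemma LX (LY ^ n) H x y]
    have : (fun y' => LX (fun x' => H x' y') x)
        = fun y' => LY (fun y'' => H x y'') y' := by
      funext y'; exact hdual x y'
    rw [this, pow_succ]
    rfl

/-- If the generators `L_X` (acting in the first variable) and `L_Y`
(acting in the second variable) are dual with duality function `H`, i.e.
`[L_X H(·,y)](x) = [L_Y H(x,·)](y)` for all `x, y`, then the semigroups are dual:
`[e^{tL_X} H(·,y)](x) = [e^{tL_Y} H(x,·)](y)` for all `t ≥ 0`. -/
theorem stmt12 (E F : Type*) [Fintype E] [Fintype F]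
    (LX : (E → ℝ) →L[ℝ] (E → ℝ)) (LY : (F → ℝ) →L[ℝ] (F → ℝ))
    (H : E → F → ℝ)
    (hdual : ∀ (x : E) (y : F), LX (fun x' => H x' y) x = LY (fun y' => H x y') y) :
    ∀ (t : ℝ), 0 ≤ t → ∀ (x : E) (y : F),
      (exp (t • LX)) (fun x' => H x' y) x
        = (exp (t • LY)) (fun y' => H x y') y := by
  intro t _ x y
  rw [exp_eq_tsum (𝕂 := ℝ), exp_eq_tsum (𝕂 := ℝ)]
  have hsX : Summable fun n : ℕ => ((n.factorial : ℝ)⁻¹ • (t • LX) ^ n) := expSeries_summable' _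
  have hsY : Summable fun n : ℕ => ((n.factorial : ℝ)⁻¹ • (t • LY) ^ n) := expSeries_summable' _
  have hX := (hsX.hasSum.mapL ((ContinuousLinearMap.proj x).comp
      (ContinuousLinearMap.apply ℝ (E → ℝ) (fun x' => H x' y)))).tsum_eq
  have hY := (hsY.hasSum.mapL ((ContinuousLinearMap.proj y).comp
      (ContinuousLinearMap.apply ℝ (F → ℝ) (fun y' => H x y')))).tsum_eq
  simp only [ContinuousLinearMap.coe_comp', Function.comp_apply,
    ContinuousLinearMap.apply_apply, ContinuousLinearMap.proj_apply] at hX hY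
  rw [← hX, ← hY]
  apply tsum_congr
  intro n
  simp only [ContinuousLinearMap.smul_apply, Pi.smul_apply, smul_pow,
    smul_eq_mul]
  rw [pow_dual LX LY H hdual n x y]
end

section
/- Let A and B be square matrices (over ℝ, indexed by a finite set) and let v be a vector such that A (e^{tB} v) = B (e^{tB} v) for all t ≥ 0 — equivalently, (A - B) B^k v = 0 for all k ≥ 0. Then e^{tA} v = e^{tB} v for all t ≥ 0. -/
open NormedSpace

private lemma expDeriv (ι : Type*) [Fintype ι] (A : (ι → ℝ) →L[ℝ] (ι → ℝ)) (v : ι → ℝ)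
    (t : ℝ) :
    HasDerivAt (fun s : ℝ => (exp (s • A)) v) (A ((exp (t • A)) v)) t := by
  have h1 := (hasDerivAt_exp_smul_const' A t).clm_apply (hasDerivAt_const t v)
  simpa [ContinuousLinearMap.mul_apply] using h1

/-- If `A` and `B` are square real matrices (as operators on `ι → ℝ` for a
finite index set `ι`) and `v` a vector with `A (e^{tB} v) = B (e^{tB} v)` for all
`t ≥ 0`, then `e^{tA} v = e^{tB} v` for all `t ≥ 0`. -/
theorem stmt13 (ι : Type*) [Fintype ι]
    (A B : (ι → ℝ) →L[ℝ] (ι → ℝ)) (v : ι → ℝ)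
    (h : ∀ t : ℝ, 0 ≤ t → A ((exp (t • B)) v) = B ((exp (t • B)) v)) :
    ∀ t : ℝ, 0 ≤ t → (exp (t • A)) v = (exp (t • B)) v := by
  intro t ht
  have key : Set.EqOn (fun s : ℝ => (exp (s • A)) v) (fun s : ℝ => (exp (s • B)) v)
      (Set.Icc 0 t) := by
    apply ODE_solution_unique (v := fun _ y => A y) (K := ‖A‖₊)
      (fun _ => A.lipschitz)
    · exact fun s _ => (expDeriv ι A v s).continuousAt.continuousWithinAt
    · exact fun s hs => (expDeriv ι A v s).hasDerivWithinAt
    · exact fun s _ => (expDeriv ι B v s).continuousAt.continuousWithinAt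
    · intro s hs
      have := (expDeriv ι B v s).hasDerivWithinAt (s := Set.Ici s)
      simpa [h s hs.1] using this
    · simp
  exact key (Set.right_mem_Icc.2 ht)
end

section
/- Let E be a finite set, r : E × E → ℝ with r(x,x) = 0, and suppose there is a constant λ₁ ≥ 0 with ∑_y r⁻(x,y) = λ₁ for all x, and a constant λ₂ with V(x) = λ₂ for all x. Let A f(x) = ∑_y r(x,y)(f(y)-f(x)) + λ₂ f(x), and let be the lifted Markov generator on E × {±1} with rates r⁺ (sign-preserving) and r⁻ (sign-flipping). Then for all bounded f and t ≥ 0: e^{-(2λ₁+λ₂)t} (e^{tA}f)(x) = E_{(x,+1)}[Z_t f(X̂_t)], where (X̂_t, Z_t) is the Markov chain generated by Â. -/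
open NormedSpace

/-- Intertwining lemma: if `B ∘ Φ = Φ ∘ A` then `exp B ∘ Φ = Φ ∘ exp A`. -/
lemma exp_intertwine {X Y : Type*} [NormedAddCommGroup X] [NormedSpace ℝ X]
    [CompleteSpace X] [NormedAddCommGroup Y] [NormedSpace ℝ Y] [CompleteSpace Y]
    (Φ : X →L[ℝ] Y) (A : X →L[ℝ] X) (B : Y →L[ℝ] Y)
    (h : B.comp Φ = Φ.comp A) :
    (exp B).comp Φ = Φ.comp (exp A) := by
  have hpow : ∀ n : ℕ, (B ^ n).comp Φ = Φ.comp (A ^ n) := by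
    intro n
    induction n with
    | zero => ext y; simp [ContinuousLinearMap.one_def]
    | succ n ih =>
      rw [pow_succ, pow_succ, ContinuousLinearMap.mul_def, ContinuousLinearMap.mul_def,
        ContinuousLinearMap.comp_assoc, h, ← ContinuousLinearMap.comp_assoc, ih,
        ContinuousLinearMap.comp_assoc]
  have hsumA := expSeries_summable' (𝕂 := ℝ) A
  have hsumB := expSeries_summable' (𝕂 := ℝ) B
  let L1 : (Y →L[ℝ] Y) →L[ℝ] (X →L[ℝ] Y) := (ContinuousLinearMap.compL ℝ X Y Y).flip Φ
  let L2 : (X →L[ℝ] X) →L[ℝ] (X →L[ℝ] Y) := ContinuousLinearMap.compL ℝ X X Y Φ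
  have h1 : (exp B).comp Φ = L1 (exp B) := rfl
  have h2 : Φ.comp (exp A) = L2 (exp A) := rfl
  rw [h1, h2, exp_eq_tsum (𝕂 := ℝ), exp_eq_tsum (𝕂 := ℝ), L1.map_tsum hsumB, L2.map_tsum hsumA]
  refine tsum_congr fun n => ?_
  simp only [map_smul, L1, L2, ContinuousLinearMap.flip_apply,
    ContinuousLinearMap.compL_apply, hpow n]

/-- Suppose `∑ y, r⁻ x y = λ₁` for all `x` and the potential is constant
equal to `λ₂`.  With `A f x = ∑ y, r x y (f y - f x) + λ₂ f x` and `Â` the lifted Markov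
generator on `E × Bool` (rates `r⁺` sign-preserving, `r⁻` sign-flipping), one has
`e^{-(2λ₁+λ₂)t} (e^{tA} f)(x) = E_{(x,+1)}[Z_t f(X̂_t)] = (e^{tÂ} f̂)(x,+1)` with
`f̂(y,s) = s f y`. -/
theorem stmt14 (E : Type*) [Fintype E] (r : E → E → ℝ) (hr : ∀ x, r x x = 0)
    (l1 l2 : ℝ) (hl1 : 0 ≤ l1)
    (hconst : ∀ x : E, ∑ y, max (-(r x y)) 0 = l1)
    (A : (E → ℝ) →L[ℝ] (E → ℝ))
    (hA : ∀ (f : E → ℝ) (x : E),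
      A f x = (∑ y, r x y * (f y - f x)) + l2 * f x)
    (Ahat : (E × Bool → ℝ) →L[ℝ] (E × Bool → ℝ))
    (hAhat : ∀ (g : E × Bool → ℝ) (x : E) (s : Bool),
      Ahat g (x, s) = (∑ y, max (r x y) 0 * (g (y, s) - g (x, s)))
        + (∑ y, max (-(r x y)) 0 * (g (y, !s) - g (x, s)))) :
    ∀ (f : E → ℝ) (t : ℝ), 0 ≤ t → ∀ x : E,
      Real.exp (-(2 * l1 + l2) * t) * ((exp (t • A)) f x)
        = (exp (t • Ahat)) (fun p => (if p.2 then (1:ℝ) else -1) * f p.1) (x, true) := by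
  intro f t _ x
  set c : ℝ := 2 * l1 + l2 with hc
  -- the lifting map Φ
  let Φlin : (E → ℝ) →ₗ[ℝ] (E × Bool → ℝ) :=
    { toFun := fun f p => (if p.2 then (1:ℝ) else -1) * f p.1
      map_add' := by intro f g; funext p; simp [mul_add]
      map_smul' := by
        intro a f; funext p
        show (if p.2 then (1:ℝ) else -1) * (a * f p.1) = a * ((if p.2 then (1:ℝ) else -1) * f p.1)
        ring }
  let Φ : (E → ℝ) →L[ℝ] (E × Bool → ℝ) := Φlin.toContinuousLinearMap
  -- intertwining relation for the generators
  have key : Ahat.comp Φ = Φ.comp (A - c • 1) := by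
    ext g p
    obtain ⟨y0, s⟩ := p
    have hΦ : ∀ (g : E → ℝ) (p : E × Bool),
        Φ g p = (if p.2 then (1:ℝ) else -1) * g p.1 := fun _ _ => rfl
    simp only [ContinuousLinearMap.comp_apply, hΦ, hAhat]
    have hsgn : ∀ s : Bool, (if (!s) then (1:ℝ) else -1) = -(if s then (1:ℝ) else -1) := by
      intro s; cases s <;> norm_num
    simp only [hsgn]
    have h1 : ∀ y : E,
        max (r y0 y) 0 * ((if s then (1:ℝ) else -1) * g y - (if s then (1:ℝ) else -1) * g y0)
          + max (-(r y0 y)) 0 * (-(if s then (1:ℝ) else -1) * g y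
              - (if s then (1:ℝ) else -1) * g y0)
        = (if s then (1:ℝ) else -1) *
            (r y0 y * (g y - g y0) - 2 * max (-(r y0 y)) 0 * g y0) := by
      intro y
      have hmax : max (r y0 y) 0 - max (-(r y0 y)) 0 = r y0 y := by
        rcases le_or_gt 0 (r y0 y) with h | h
        · rw [max_eq_left h, max_eq_right (by linarith)]; ring
        · rw [max_eq_right h.le, max_eq_left (by linarith)]; ring
      cases s
      · simp only [Bool.false_eq_true, if_false]
        linear_combination (g y0 - g y) * hmax
      · simp only [if_true]
        linear_combination (g y - g y0) * hmax
    rw [← Finset.sum_add_distrib]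
    simp only [h1]
    rw [← Finset.mul_sum]
    have h2 : (∑ y, (r y0 y * (g y - g y0) - 2 * max (-(r y0 y)) 0 * g y0))
        = (∑ y, r y0 y * (g y - g y0)) - 2 * l1 * g y0 := by
      rw [Finset.sum_sub_distrib, ← Finset.sum_mul, ← Finset.mul_sum, hconst]
    rw [h2]
    have h3 : ((A - c • (1 : (E → ℝ) →L[ℝ] (E → ℝ))) g) y0
        = (∑ y, r y0 y * (g y - g y0)) - 2 * l1 * g y0 := by
      simp only [ContinuousLinearMap.sub_apply, ContinuousLinearMap.smul_apply,
        ContinuousLinearMap.one_apply, Pi.sub_apply, Pi.smul_apply, smul_eq_mul, hA]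
      ring
    rw [h3]
  -- intertwining for t • generators
  have keyt : (t • Ahat).comp Φ = Φ.comp (t • (A - c • 1)) := by
    rw [ContinuousLinearMap.smul_comp, ContinuousLinearMap.comp_smul, key]
  have hexp := exp_intertwine Φ (t • (A - c • 1)) (t • Ahat) keyt
  -- compute exp (t • (A - c • 1))
  have hsplit : t • (A - c • (1 : (E → ℝ) →L[ℝ] (E → ℝ)))
      = t • A + (-(c * t)) • (1 : (E → ℝ) →L[ℝ] (E → ℝ)) := by
    rw [smul_sub, smul_smul, mul_comm t c, sub_eq_add_neg]; congr 1; exact (neg_smul _ _).symm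
  have hcomm : Commute (t • A) ((-(c * t)) • (1 : (E → ℝ) →L[ℝ] (E → ℝ))) :=
    (Commute.one_right (t • A)).smul_right _
  have hexp2 : exp (t • (A - c • (1 : (E → ℝ) →L[ℝ] (E → ℝ))))
      = Real.exp (-(c * t)) • exp (t • A) := by
    rw [hsplit, exp_add_of_commute_of_mem_ball (𝕂 := ℝ) hcomm
      ((expSeries_radius_eq_top ℝ ((E → ℝ) →L[ℝ] (E → ℝ))).symm ▸ edist_lt_top _ _)
      ((expSeries_radius_eq_top ℝ ((E → ℝ) →L[ℝ] (E → ℝ))).symm ▸ edist_lt_top _ _)]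
    have h1 : ((-(c * t)) • (1 : (E → ℝ) →L[ℝ] (E → ℝ)))
        = algebraMap ℝ _ (-(c * t)) := by
      rw [Algebra.algebraMap_eq_smul_one]
    rw [h1, ← algebraMap_exp_comm, ← Real.exp_eq_exp_ℝ, Algebra.algebraMap_eq_smul_one,
      mul_smul_comm, mul_one]
  -- conclude
  have := congrArg (fun (T : (E → ℝ) →L[ℝ] (E × Bool → ℝ)) => T f (x, true)) hexp
  simp only [ContinuousLinearMap.comp_apply] at this
  have hrhs : (exp (t • Ahat)) (fun p => (if p.2 then (1:ℝ) else -1) * f p.1) (x, true)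
      = (exp (t • Ahat)) (Φ f) (x, true) := rfl
  rw [hrhs, this, hexp2]
  have : Φ ((Real.exp (-(c * t)) • exp (t • A)) f) (x, true)
      = Real.exp (-(c * t)) * ((exp (t • A)) f x) := by
    simp only [ContinuousLinearMap.smul_apply, Pi.smul_apply, smul_eq_mul]
    show (if true then (1:ℝ) else -1) * _ = _
    simp
  rw [this, hc]
  ring_nf
end

section
/- Let E be a finite set and suppose the matrix A has the form (Af)(x) = ∑_y r(x,y)(f(y)-f(x)) with all r(x,y) ≤ 0 and ∑_y (-r(x,y)) = λ₁ for every x (all rates negative, constant total rate). Let X̂ be the Markov chain with jump rates -r(x,y) ≥ 0, and N_t its number of jumps up to time t. Then for bounded f, (e^{tA}f)(x) = e^{2λ₁ t}·( E_x[f(X̂_t) 1{N_t even}] - E_x[f(X̂_t) 1{N_t odd}] ). -/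
open NormedSpace

section aux
variable {M N : Type*} [NormedAddCommGroup M] [NormedSpace ℝ M] [CompleteSpace M]
  [NormedAddCommGroup N] [NormedSpace ℝ N] [CompleteSpace N]

lemma intertwine_exp (Φ : M →L[ℝ] N) (B : M →L[ℝ] M) (C : N →L[ℝ] N)
    (h : C.comp Φ = Φ.comp B) :
    (exp C).comp Φ = Φ.comp (exp B) := by
  have hn : ∀ n : ℕ, (C ^ n).comp Φ = Φ.comp (B ^ n) := by
    intro n
    induction n with
    | zero => ext v; simp
    | succ n ih =>
      rw [pow_succ, pow_succ]
      calc (C ^ n * C).comp Φ = (C ^ n).comp (C.comp Φ) := by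
            ext v; simp [ContinuousLinearMap.mul_apply]
        _ = (C ^ n).comp (Φ.comp B) := by rw [h]
        _ = ((C ^ n).comp Φ).comp B := by ext v; simp
        _ = (Φ.comp (B ^ n)).comp B := by rw [ih]
        _ = Φ.comp (B ^ n * B) := by ext v; simp [ContinuousLinearMap.mul_apply]
  have hC := expSeries_summable' (𝕂 := ℝ) C
  have hB := expSeries_summable' (𝕂 := ℝ) B
  rw [exp_eq_tsum ℝ, exp_eq_tsum ℝ]
  have e1 : (∑' n : ℕ, ((n.factorial : ℝ))⁻¹ • C ^ n).comp Φ
      = ∑' n : ℕ, (((n.factorial : ℝ))⁻¹ • C ^ n).comp Φ :=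
    ((ContinuousLinearMap.compL ℝ M N N).flip Φ).map_tsum hC
  have e2 : Φ.comp (∑' n : ℕ, ((n.factorial : ℝ))⁻¹ • B ^ n)
      = ∑' n : ℕ, Φ.comp (((n.factorial : ℝ))⁻¹ • B ^ n) :=
    (ContinuousLinearMap.compL ℝ M M N Φ).map_tsum hB
  dsimp only
  rw [e1, e2]
  congr 1
  funext n
  ext v
  simp only [ContinuousLinearMap.comp_apply, ContinuousLinearMap.smul_apply]
  rw [show (C ^ n) (Φ v) = ((C ^ n).comp Φ) v from rfl, hn n, map_smul]
  rfl

end aux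

/-- All-negative-rates case: `A f x = ∑ y, r x y (f y - f x)` with
`r x y ≤ 0` and constant total rate `∑ y, -(r x y) = λ₁`.  Then
`(e^{tA} f)(x) = e^{2λ₁ t} (E_x[f(X̂_t) 1{N_t even}] - E_x[f(X̂_t) 1{N_t odd}])`.
The right-hand side expectation equals `(e^{tÂ} f̂)(x,+1)` where `Â` is the
particle–antiparticle generator (every jump flips the sign, since `r⁺ ≡ 0`) and
`f̂(y,s) = s f y`, which is the form stated here. -/
theorem stmt17 (E : Type*) [Fintype E] (r : E → E → ℝ) (hr : ∀ x, r x x = 0)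
    (hneg : ∀ x y, r x y ≤ 0) (l1 : ℝ)
    (hconst : ∀ x : E, ∑ y, -(r x y) = l1)
    (A : (E → ℝ) →L[ℝ] (E → ℝ))
    (hA : ∀ (f : E → ℝ) (x : E), A f x = ∑ y, r x y * (f y - f x))
    (Ahat : (E × Bool → ℝ) →L[ℝ] (E × Bool → ℝ))
    (hAhat : ∀ (g : E × Bool → ℝ) (x : E) (s : Bool),
      Ahat g (x, s) = ∑ y, (-(r x y)) * (g (y, !s) - g (x, s))) :
    ∀ (f : E → ℝ) (t : ℝ), 0 ≤ t → ∀ x : E,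
      (exp (t • A)) f x
        = Real.exp (2 * l1 * t) *
          (exp (t • Ahat)) (fun p => (if p.2 then (1:ℝ) else -1) * f p.1) (x, true) := by
  intro f t _ht x
  let Φl : (E → ℝ) →ₗ[ℝ] (E × Bool → ℝ) :=
    { toFun := fun g p => (if p.2 then (1:ℝ) else -1) * g p.1
      map_add' := by intro g h; funext p; simp [mul_add]
      map_smul' := by intro c g; funext p; simp [Pi.smul_apply, smul_eq_mul, mul_left_comm] }
  let Φ : (E → ℝ) →L[ℝ] (E × Bool → ℝ) := LinearMap.toContinuousLinearMap Φl
  have hΦ : ∀ (g : E → ℝ) (p : E × Bool), Φ g p = (if p.2 then (1:ℝ) else -1) * g p.1 :=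
    fun g p => rfl
  have hsumr : ∀ x : E, ∑ y, r x y = -l1 := by
    intro x
    have h := hconst x
    rw [Finset.sum_neg_distrib] at h
    linarith
  set B : (E → ℝ) →L[ℝ] (E → ℝ) := A - (2 * l1) • 1 with hB
  have hAg : ∀ (g : E → ℝ) (x : E), A g x = (∑ y, r x y * g y) + l1 * g x := by
    intro g x
    rw [hA]
    simp only [mul_sub]
    rw [Finset.sum_sub_distrib, ← Finset.sum_mul, hsumr x]
    ring
  have key : Ahat.comp Φ = Φ.comp B := by
    ext g p
    obtain ⟨x, s⟩ := p
    simp only [ContinuousLinearMap.comp_apply]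
    rw [hAhat (Φ g) x s]
    have step : (∑ y, (-(r x y)) * (Φ g (y, !s) - Φ g (x, s)))
        = (if s then (1:ℝ) else -1) * ((∑ y, r x y * g y) - l1 * g x) := by
      have hterm : ∀ y, (-(r x y)) * (Φ g (y, !s) - Φ g (x, s))
          = (if s then (1:ℝ) else -1) * (r x y * g y)
            - (-(r x y)) * ((if s then (1:ℝ) else -1) * g x) := by
        intro y
        rw [hΦ, hΦ]
        cases s <;> simp <;> try ring
      rw [Finset.sum_congr rfl fun y _ => hterm y, Finset.sum_sub_distrib,
        ← Finset.mul_sum, ← Finset.sum_mul, hconst x]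
      ring
    rw [step, hΦ]
    simp only [hB, ContinuousLinearMap.sub_apply, ContinuousLinearMap.smul_apply,
      ContinuousLinearMap.one_apply, Pi.sub_apply, Pi.smul_apply, smul_eq_mul, hAg]
    ring
  have keyt : (t • Ahat).comp Φ = Φ.comp (t • B) := by
    rw [ContinuousLinearMap.smul_comp, key, ContinuousLinearMap.comp_smul]
  have hexp := intertwine_exp Φ (t • B) (t • Ahat) keyt
  have hcomm : Commute (t • A) ((-(2 * l1 * t)) • (1 : (E → ℝ) →L[ℝ] (E → ℝ))) :=
    Commute.smul_right (Commute.smul_left (Commute.one_right A) t) _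
  have htB : t • B = t • A + (-(2 * l1 * t)) • (1 : (E → ℝ) →L[ℝ] (E → ℝ)) := by
    rw [hB, smul_sub, smul_smul, show t * (2 * l1) = 2 * l1 * t from by ring,
      sub_eq_add_neg]
    congr 1
    exact (neg_smul _ _).symm
  have hsmul1 : exp ((-(2 * l1 * t)) • (1 : (E → ℝ) →L[ℝ] (E → ℝ)))
      = Real.exp (-(2 * l1 * t)) • (1 : (E → ℝ) →L[ℝ] (E → ℝ)) := by
    rw [show ((-(2 * l1 * t)) • (1 : (E → ℝ) →L[ℝ] (E → ℝ)))
        = algebraMap ℝ _ (-(2 * l1 * t)) from (Algebra.algebraMap_eq_smul_one _).symm,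
      ← algebraMap_exp_comm, Real.exp_eq_exp_ℝ, Algebra.algebraMap_eq_smul_one]
  have hexpB : exp (t • B) = Real.exp (-(2 * l1 * t)) • exp (t • A) := by
    letI : NormedAlgebra ℚ ((E → ℝ) →L[ℝ] (E → ℝ)) := NormedAlgebra.restrictScalars ℚ ℝ _
    rw [htB, exp_add_of_commute hcomm, hsmul1, mul_smul_comm, mul_one]
  have hfin := congrFun (congrArg
    (fun (T : (E → ℝ) →L[ℝ] (E × Bool → ℝ)) => T f) hexp) (x, true)
  simp only [ContinuousLinearMap.comp_apply] at hfin
  have hΦf : Φ f = fun p => (if p.2 then (1:ℝ) else -1) * f p.1 := rfl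
  rw [← hΦf, hfin, hexpB]
  simp only [ContinuousLinearMap.smul_apply, Pi.smul_apply, smul_eq_mul]
  rw [hΦ]
  simp only [if_true, one_mul]
  simp only [Pi.smul_apply, smul_eq_mul, ← mul_assoc, ← Real.exp_add]
  rw [show 2 * l1 * t + -(2 * l1 * t) = 0 from by ring, Real.exp_zero, one_mul]
end
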